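/- Let J, K ⊂ ℝ^n be convex sets such that J is compact and J ⊕ K is an affine free sum with common point p ∈ ℚ^n. Then (cone(J ⊕ K))_ℤ is the disjoint union over x ∈ pllenv(cone J) of the sets (x + cone K)_ℤ; that is, a lattice point w ∈ ℤ^{n+1} lies in cone(J ⊕ K) if and only if there exists a unique x ∈ pllenv(cone J) with w − x ∈ cone K. -/

import Mathlib

open Set Pointwise
open scoped Classical

noncomputable section

namespace ArxivFreeSum

/-- A point of `ℝ^m` is an integer lattice point iff all coordinates are integers. -/
def IsLat {m : ℕ} (x : Fin m → ℝ) : Prop := ∀ i, ∃ z : ℤ, x i = (z : ℝ)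

/-- The set of integer lattice points of a set `S`. -/
def latt {m : ℕ} (S : Set (Fin m → ℝ)) : Set (Fin m → ℝ) := {x | x ∈ S ∧ IsLat x}

variable {n : ℕ}

/-- The affine embedding `α : ℝ^n → ℝ^{n+1}`, `a ↦ (a, 1)`. -/
def emb (a : Fin n → ℝ) : Fin (n + 1) → ℝ := Fin.snoc a 1

/-- The cone over `K`: all nonnegative multiples of `α(K)`. -/
def cone (K : Set (Fin n → ℝ)) : Set (Fin (n + 1) → ℝ) :=
  {x | ∃ l : ℝ, ∃ a ∈ K, 0 ≤ l ∧ x = l • emb a}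

/-- The last standard basis vector `e_{n+1}` of `ℝ^{n+1}`. -/
def eLast (n : ℕ) : Fin (n + 1) → ℝ := Pi.single (Fin.last n) 1

/-- The vertical projection `ε_J` onto the lower envelope of `cone J`. -/
def eps (J : Set (Fin n → ℝ)) (x : Fin (n + 1) → ℝ) : Fin (n + 1) → ℝ :=
  x - sSup {l : ℝ | x - l • eLast n ∈ cone J} • eLast n

/-- The lower envelope of `cone J`. -/
def lenv (J : Set (Fin n → ℝ)) : Set (Fin (n + 1) → ℝ) := eps J '' cone J

/-- The lower lattice envelope of `cone J`. -/
def llenv (J : Set (Fin n → ℝ)) : Set (Fin (n + 1) → ℝ) := eps J '' latt (cone J)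

/-- `J ⊕ K` is a free sum. -/
def IsFreeSum (J K : Set (Fin n → ℝ)) : Prop :=
  (0 : Fin n → ℝ) ∈ J ∧ (0 : Fin n → ℝ) ∈ K ∧
    ∀ m : Fin n → ℝ, m ∈ Submodule.span ℝ (J ∪ K) → IsLat m →
      ∃! q : (Fin n → ℝ) × (Fin n → ℝ),
        (q.1 ∈ Submodule.span ℝ J ∧ IsLat q.1) ∧
        (q.2 ∈ Submodule.span ℝ K ∧ IsLat q.2) ∧ m = q.1 + q.2

/-- `N_{J,K}(m)`: the number of pairs of lattice points of `cone J` and `cone K` summing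
to `m`. -/
def Npairs (J K : Set (Fin n → ℝ)) (m : Fin (n + 1) → ℤ) : ℕ :=
  Set.ncard {q : (Fin (n + 1) → ℝ) × (Fin (n + 1) → ℝ) |
    q.1 ∈ latt (cone J) ∧ q.2 ∈ latt (cone K) ∧ q.1 + q.2 = fun i => (m i : ℝ)}

/-- The coefficientwise form of the multivariate Braun equation
`σ_{cone(J⊕K)} = (1 - z_{n+1}) σ_{cone J} σ_{cone K}`. -/
def BraunEq (J K : Set (Fin n → ℝ)) : Prop :=
  ∀ m : Fin (n + 1) → ℤ,
    (Npairs J K m : ℤ) - (Npairs J K (m - Pi.single (Fin.last n) 1) : ℤ) =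
      if (fun i => (m i : ℝ)) ∈ cone (convexHull ℝ (J ∪ K)) then 1 else 0

/-- A rational polytope: convex hull of finitely many rational points. -/
def IsRatPolytope (P : Set (Fin n → ℝ)) : Prop :=
  ∃ V : Finset (Fin n → ℝ), (∀ v ∈ V, ∀ i, ∃ q : ℚ, v i = (q : ℝ)) ∧
    P = convexHull ℝ (V : Set (Fin n → ℝ))

/-- A lattice polytope: convex hull of finitely many lattice points. -/
def IsLatPolytope (P : Set (Fin n → ℝ)) : Prop :=
  ∃ V : Finset (Fin n → ℝ), (∀ v ∈ V, IsLat v) ∧ P = convexHull ℝ (V : Set (Fin n → ℝ))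

/-- The polar dual `P^∨ ⊆ (lin P)^*` of a polytope `P` containing the origin. -/
def dualSet (P : Set (Fin n → ℝ)) : Set (Module.Dual ℝ (Submodule.span ℝ P)) :=
  {φ | ∀ a : Submodule.span ℝ P, (a : Fin n → ℝ) ∈ P → φ a ≤ 1}

/-- Membership in the dual integer lattice `(lin P)^*_ℤ`. -/
def IsDualLatticePt (P : Set (Fin n → ℝ)) (φ : Module.Dual ℝ (Submodule.span ℝ P)) : Prop :=
  ∀ a : Submodule.span ℝ P, IsLat (a : Fin n → ℝ) → ∃ z : ℤ, φ a = (z : ℝ)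

/-- `P^∨` is a lattice polyhedron: every vertex (= extreme point) of `P^∨` lies in the
dual integer lattice. -/
def DualIsLatticePolyhedron (P : Set (Fin n → ℝ)) : Prop :=
  ∀ φ ∈ Set.extremePoints ℝ (dualSet P), IsDualLatticePt P φ

/-- `den(P^∨)`: the smallest positive integer `d` such that `d • P^∨` is a lattice
polyhedron. -/
def dualDen (P : Set (Fin n → ℝ)) : ℕ :=
  sInf {d : ℕ | 0 < d ∧ ∀ φ ∈ Set.extremePoints ℝ (dualSet P), IsDualLatticePt P ((d : ℝ) • φ)}

/-- `L_P(k)`, with `L_P(0) = 1`. -/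
def ehr (P : Set (Fin n → ℝ)) (k : ℕ) : ℕ :=
  if k = 0 then 1 else Set.ncard (latt ((k : ℝ) • P))

/-- The coefficientwise form of `Ehr_{P⊕Q}(t) = (1-t) Ehr_P(t) Ehr_Q(t)`. -/
def EhrEq (P Q : Set (Fin n → ℝ)) : Prop :=
  ∀ k : ℕ,
    (ehr (convexHull ℝ (P ∪ Q)) k : ℤ) =
      (∑ i ∈ Finset.range (k + 1), (ehr P i : ℤ) * (ehr Q (k - i) : ℤ)) -
        ∑ i ∈ Finset.range k, (ehr P i : ℤ) * (ehr Q (k - 1 - i) : ℤ)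

/-- `P` is reflexive: a lattice polytope containing the origin in its relative interior
whose polar dual is a lattice polytope. -/
def IsReflexive (P : Set (Fin n → ℝ)) : Prop :=
  IsLatPolytope P ∧ (0 : Fin n → ℝ) ∈ intrinsicInterior ℝ P ∧ DualIsLatticePolyhedron P

/-- `P` is Gorenstein of index `k`. -/
def IsGorenstein (P : Set (Fin n → ℝ)) (k : ℕ) : Prop :=
  IsLatPolytope P ∧ 0 < k ∧
    ∃ m : Fin n → ℝ, IsLat m ∧ IsReflexive ((fun x => x - m) '' ((k : ℝ) • P))

/-- `p` is a rational point. -/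
def IsRatPt (p : Fin n → ℝ) : Prop := ∀ i, ∃ q : ℚ, p i = (q : ℝ)

/-- Membership in the lattice `Λ^p` generated by `e_1, …, e_n` and `p`. -/
def InLambda (p x : Fin n → ℝ) : Prop :=
  ∃ (z : Fin n → ℤ) (c : ℤ), x = (fun i => (z i : ℝ)) + (c : ℝ) • p

/-- `den(p)`: the lcm of the denominators of the coordinates of `p`, i.e. the least
positive integer `r` with `r • p` a lattice point. -/
def denPt (p : Fin n → ℝ) : ℕ := sInf {r : ℕ | 0 < r ∧ IsLat ((r : ℝ) • p)}

/-- The projection `ε^p_J` parallel to `α(p)` onto the `p`-lower envelope of `cone J`. -/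
def epsP (p : Fin n → ℝ) (J : Set (Fin n → ℝ)) (x : Fin (n + 1) → ℝ) : Fin (n + 1) → ℝ :=
  x - sSup {l : ℝ | x - l • emb p ∈ cone J} • emb p

/-- The `p`-lower envelope of `cone J`. -/
def plenv (p : Fin n → ℝ) (J : Set (Fin n → ℝ)) : Set (Fin (n + 1) → ℝ) := epsP p J '' cone J

/-- The `p`-lower lattice envelope of `cone J`. -/
def pllenv (p : Fin n → ℝ) (J : Set (Fin n → ℝ)) : Set (Fin (n + 1) → ℝ) :=
  epsP p J '' latt (cone J)

/-- `J ⊕ K` is an affine free sum with common (rational) point `p`. -/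
def IsAffineFreeSum (J K : Set (Fin n → ℝ)) (p : Fin n → ℝ) : Prop :=
  IsRatPt p ∧ p ∈ J ∧ p ∈ K ∧
    ((affineSpan ℝ J : Set (Fin n → ℝ)) ∩ (affineSpan ℝ K : Set (Fin n → ℝ)) = {p}) ∧
    ∀ m : Fin n → ℝ, m ∈ Submodule.span ℝ ((fun x => x - p) '' (J ∪ K)) → InLambda p m →
      ∃! q : (Fin n → ℝ) × (Fin n → ℝ),
        (q.1 ∈ Submodule.span ℝ ((fun x => x - p) '' J) ∧ InLambda p q.1) ∧
        (q.2 ∈ Submodule.span ℝ ((fun x => x - p) '' K) ∧ InLambda p q.2) ∧ m = q.1 + q.2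

/-!
Write a lattice point `w` of `cone (J ⊕ K)` as `y + z` with `y ∈ cone J` and `z ∈ cone K`.
Projecting along `α(p)` onto `ℝ^n` sends `w` into `Λ^p`; since `lin(J - p) ∩ lin(K - p) = 0`, the
free-sum splitting of this projection has the projection of `y` as its `J`-part, which therefore
lies in `Λ^p` as well. So `y₀ = y + s α(p)` is a lattice point of `cone J` for a suitable `s ≥ 0`,
and `x = ε^p_J(y₀) = y₀ - μ α(p)` with `μ ≥ s` (as `y ∈ cone J`), whence
`w - x = z + (μ - s) α(p) ∈ cone K`. Two such `x` differ by a vector projecting into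
`lin(J - p) ∩ lin(K - p) = 0`, i.e. by a multiple of `α(p)`, which the minimality of points of the
`p`-lower envelope rules out.
-/

@[simp]
lemma emb_castSucc (a : Fin n → ℝ) (i : Fin n) : emb a i.castSucc = a i := by
  simp [emb]

@[simp]
lemma emb_last (a : Fin n → ℝ) : emb a (Fin.last n) = 1 := by
  simp [emb]

lemma emb_add_smul {a b : Fin n → ℝ} {u v : ℝ} (huv : u + v = 1) :
    emb (u • a + v • b) = u • emb a + v • emb b := by
  funext i
  induction i using Fin.lastCases with
  | last => simp [huv]
  | cast j => simp

lemma smul_emb_mem_cone {J : Set (Fin n → ℝ)} {a : Fin n → ℝ} {l : ℝ}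
    (ha : a ∈ J) (hl : 0 ≤ l) : l • emb a ∈ cone J := ⟨l, a, ha, hl, rfl⟩

lemma cone_mono {S T : Set (Fin n → ℝ)} (h : S ⊆ T) : cone S ⊆ cone T := by
  rintro x ⟨l, a, ha, hl, rfl⟩
  exact ⟨l, a, h ha, hl, rfl⟩

lemma add_mem_cone {J : Set (Fin n → ℝ)} (hJ : Convex ℝ J) {x y : Fin (n + 1) → ℝ}
    (hx : x ∈ cone J) (hy : y ∈ cone J) : x + y ∈ cone J := by
  obtain ⟨l, a, ha, hl, rfl⟩ := hx
  obtain ⟨m, b, hb, hm, rfl⟩ := hy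
  rcases (add_nonneg hl hm).eq_or_lt with hlm | hlm
  · obtain ⟨rfl, rfl⟩ : l = 0 ∧ m = 0 := ⟨by linarith, by linarith⟩
    exact ⟨0, a, ha, le_rfl, by simp⟩
  · have hcomb : (l / (l + m)) • a + (m / (l + m)) • b ∈ J :=
      hJ ha hb (by positivity) (by positivity) (by field_simp)
    refine ⟨l + m, _, hcomb, hlm.le, ?_⟩
    rw [emb_add_smul (by field_simp), smul_add, smul_smul, smul_smul]
    field_simp

lemma last_nonneg_of_mem_cone {J : Set (Fin n → ℝ)} {x : Fin (n + 1) → ℝ}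
    (hx : x ∈ cone J) : 0 ≤ x (Fin.last n) := by
  obtain ⟨l, a, -, hl, rfl⟩ := hx
  simpa using hl

lemma mem_cone_convexHull_union_iff {J K : Set (Fin n → ℝ)} {p : Fin n → ℝ}
    (hJ : Convex ℝ J) (hK : Convex ℝ K) (hpJ : p ∈ J) (hpK : p ∈ K) {w : Fin (n + 1) → ℝ} :
    w ∈ cone (convexHull ℝ (J ∪ K)) ↔ ∃ y ∈ cone J, ∃ z ∈ cone K, w = y + z := by
  constructor
  · rintro ⟨l, c, hc, hl, rfl⟩
    rw [convexHull_union ⟨p, hpJ⟩ ⟨p, hpK⟩, hJ.convexHull_eq, hK.convexHull_eq,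
      mem_convexJoin] at hc
    obtain ⟨a, ha, b, hb, u, v, hu, hv, huv, rfl⟩ := hc
    refine ⟨(l * u) • emb a, smul_emb_mem_cone ha (by positivity),
      (l * v) • emb b, smul_emb_mem_cone hb (by positivity), ?_⟩
    rw [emb_add_smul huv, smul_add, mul_smul, mul_smul]
  · rintro ⟨y, hy, z, hz, rfl⟩
    exact add_mem_cone (convex_convexHull ℝ _)
      (cone_mono (subset_union_left.trans (subset_convexHull ℝ _)) hy)
      (cone_mono (subset_union_right.trans (subset_convexHull ℝ _)) hz)

lemma isClosed_cone {J : Set (Fin n → ℝ)} (hJ : IsCompact J) : IsClosed (cone J) := by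
  let f : ℝ × (Fin n → ℝ) → Fin (n + 1) → ℝ := fun q => q.1 • emb q.2
  have hf : Continuous f :=
    continuous_fst.smul (continuous_snd.finSnoc (A := fun _ => ℝ) continuous_const)
  refine isClosed_of_closure_subset fun v hv => ?_
  let c := v (Fin.last n) + 1
  have hslab : IsOpen {w : Fin (n + 1) → ℝ | w (Fin.last n) < c} :=
    isOpen_lt (continuous_apply _) continuous_const
  -- Below height `c`, the cone is the compact image of `[0, c] × J`.
  have hsub : {w : Fin (n + 1) → ℝ | w (Fin.last n) < c} ∩ cone J ⊆ f '' (Icc 0 c ×ˢ J) := by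
    rintro _ ⟨hwc, l, a, ha, hl, rfl⟩
    exact ⟨(l, a), ⟨⟨hl, (by simpa using hwc : l < c).le⟩, ha⟩, rfl⟩
  have hv' : v ∈ f '' (Icc 0 c ×ˢ J) := by
    rw [← ((isCompact_Icc.prod hJ).image hf).isClosed.closure_eq]
    exact closure_mono hsub (hslab.inter_closure ⟨by simp [c], hv⟩)
  obtain ⟨⟨l, a⟩, ⟨⟨hl, -⟩, ha⟩, rfl⟩ := hv'
  exact ⟨l, a, ha, hl, rfl⟩

section Envelope

variable {J : Set (Fin n → ℝ)} {p : Fin n → ℝ} {x : Fin (n + 1) → ℝ}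

lemma bddAbove_shifts_mem_cone : BddAbove {l : ℝ | x - l • emb p ∈ cone J} :=
  ⟨x (Fin.last n), fun l hl => by simpa using last_nonneg_of_mem_cone hl⟩

lemma sSup_shifts_mem_cone (hJ : IsCompact J) (hx : x ∈ cone J) :
    sSup {l : ℝ | x - l • emb p ∈ cone J} ∈ {l : ℝ | x - l • emb p ∈ cone J} :=
  ((isClosed_cone hJ).preimage (by fun_prop)).csSup_mem ⟨0, by simpa using hx⟩
    bddAbove_shifts_mem_cone

lemma epsP_mem_cone (hJ : IsCompact J) (hx : x ∈ cone J) : epsP p J x ∈ cone J :=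
  sSup_shifts_mem_cone hJ hx

lemma nonpos_of_epsP_sub_smul_mem_cone {l : ℝ}
    (hl : epsP p J x - l • emb p ∈ cone J) : l ≤ 0 := by
  have hmem : sSup {l : ℝ | x - l • emb p ∈ cone J} + l ∈ {l : ℝ | x - l • emb p ∈ cone J} := by
    simpa only [mem_ofPred_eq, epsP, add_smul, sub_sub] using hl
  linarith [le_csSup bddAbove_shifts_mem_cone hmem]

lemma exists_le_sub_epsP_eq_smul_emb {s : ℝ} (hs : x - s • emb p ∈ cone J) :
    ∃ μ, s ≤ μ ∧ x - epsP p J x = μ • emb p :=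
  ⟨_, le_csSup bddAbove_shifts_mem_cone hs, sub_sub_cancel _ _⟩

lemma epsP_eq_of_sub_eq_smul_emb (hJ : IsCompact J) {y : Fin (n + 1) → ℝ}
    (hx : x ∈ cone J) (hy : y ∈ cone J) {c : ℝ} (h : epsP p J x - epsP p J y = c • emb p) :
    epsP p J x = epsP p J y := by
  have hc : c ≤ 0 := nonpos_of_epsP_sub_smul_mem_cone <| by
    rw [← h, sub_sub_cancel]; exact epsP_mem_cone hJ hy
  have hc' : -c ≤ 0 := nonpos_of_epsP_sub_smul_mem_cone <| by
    rw [neg_smul, sub_neg_eq_add, ← h, add_sub_cancel]; exact epsP_mem_cone hJ hx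
  rwa [le_antisymm hc (by linarith), zero_smul, sub_eq_zero] at h

end Envelope

lemma pllenv_subset_cone {J : Set (Fin n → ℝ)} (hJ : IsCompact J) (p : Fin n → ℝ) :
    pllenv p J ⊆ cone J := by
  rintro _ ⟨y, ⟨hy, -⟩, rfl⟩
  exact epsP_mem_cone hJ hy

lemma exists_pos_nat_isLat_smul {p : Fin n → ℝ} (hp : IsRatPt p) :
    ∃ r : ℕ, 0 < r ∧ IsLat ((r : ℝ) • p) := by
  choose q hq using hp
  refine ⟨∏ i, (q i).den, Finset.prod_pos fun i _ => (q i).pos, fun i => ?_⟩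
  obtain ⟨k, hk⟩ := Finset.dvd_prod_of_mem (fun i => (q i).den) (Finset.mem_univ i)
  refine ⟨k * (q i).num, ?_⟩
  have hden : ((q i).den : ℝ) ≠ 0 := Nat.cast_ne_zero.mpr (q i).den_nz
  rw [Pi.smul_apply, smul_eq_mul, hq i, hk, Rat.cast_def]
  push_cast
  field_simp

/-- Projection of `ℝ^{n+1}` onto `ℝ^n` along `α(p)`. -/
def projAlong (p : Fin n → ℝ) : (Fin (n + 1) → ℝ) →ₗ[ℝ] Fin n → ℝ where
  toFun v j := v j.castSucc - v (Fin.last n) * p j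
  map_add' v w := by funext j; simp only [Pi.add_apply]; ring
  map_smul' c v := by funext j; simp only [Pi.smul_apply, smul_eq_mul, RingHom.id_apply]; ring

section Projection

variable {p : Fin n → ℝ} {v : Fin (n + 1) → ℝ}

@[simp]
lemma projAlong_apply (j : Fin n) : projAlong p v j = v j.castSucc - v (Fin.last n) * p j := rfl

lemma projAlong_smul_emb (a : Fin n → ℝ) (l : ℝ) : projAlong p (l • emb a) = l • (a - p) := by
  funext j
  simp only [projAlong_apply, Pi.smul_apply, emb_castSucc, emb_last, smul_eq_mul, Pi.sub_apply]
  ring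

lemma projAlong_mem_span_of_mem_cone {J : Set (Fin n → ℝ)} (hv : v ∈ cone J) :
    projAlong p v ∈ Submodule.span ℝ ((fun x => x - p) '' J) := by
  obtain ⟨l, a, ha, -, rfl⟩ := hv
  rw [projAlong_smul_emb]
  exact Submodule.smul_mem _ _ (Submodule.subset_span ⟨a, ha, rfl⟩)

lemma eq_smul_emb_of_projAlong_eq_zero (h : projAlong p v = 0) :
    v = v (Fin.last n) • emb p := by
  funext i
  induction i using Fin.lastCases with
  | last => simp
  | cast j =>
    have := congrFun h j
    simp only [projAlong_apply, Pi.zero_apply] at this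
    simp only [Pi.smul_apply, emb_castSucc, smul_eq_mul]
    linarith

lemma inLambda_projAlong_of_isLat (hv : IsLat v) : InLambda p (projAlong p v) := by
  choose z hz using hv
  refine ⟨fun j => z j.castSucc, -z (Fin.last n), ?_⟩
  funext j
  simp only [projAlong_apply, hz, Pi.add_apply, Pi.smul_apply, smul_eq_mul]
  push_cast
  ring

lemma exists_nonneg_isLat_add_smul_emb (hp : IsRatPt p) (hv : InLambda p (projAlong p v)) :
    ∃ s : ℝ, 0 ≤ s ∧ IsLat (v + s • emb p) := by
  obtain ⟨z, c, hzc⟩ := hv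
  obtain ⟨r, hr, hrp⟩ := exists_pos_nat_isLat_smul hp
  obtain ⟨N, hN⟩ := exists_nat_ge ((c : ℝ) + v (Fin.last n))
  have hNr : (c : ℝ) + v (Fin.last n) ≤ N * r := hN.trans
    (le_mul_of_one_le_right (Nat.cast_nonneg N) (Nat.one_le_cast.mpr hr))
  refine ⟨(N : ℝ) * r - c - v (Fin.last n), by linarith, fun i => ?_⟩
  induction i using Fin.lastCases with
  | last => exact ⟨N * r - c, by simp⟩
  | cast j =>
    obtain ⟨ζ, hζ⟩ := hrp j
    have hvj := congrFun hzc j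
    simp only [projAlong_apply, Pi.add_apply, Pi.smul_apply, smul_eq_mul] at hvj hζ
    refine ⟨z j + N * ζ, ?_⟩
    simp only [Pi.add_apply, Pi.smul_apply, emb_castSucc]
    push_cast
    linear_combination hvj + (N : ℝ) * hζ

end Projection

lemma eq_zero_of_mem_span_sub_inter {k V : Type*} [Ring k] [AddCommGroup V] [Module k V]
    {J K : Set V} {p : V} (hpJ : p ∈ J) (hpK : p ∈ K)
    (hJK : (affineSpan k J : Set V) ∩ affineSpan k K = {p}) {d : V}
    (hdJ : d ∈ Submodule.span k ((fun x => x - p) '' J))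
    (hdK : d ∈ Submodule.span k ((fun x => x - p) '' K)) : d = 0 := by
  have hmem : ∀ S : Set V, p ∈ S → d ∈ Submodule.span k ((fun x => x - p) '' S) →
      d + p ∈ affineSpan k S := fun S hpS hd =>
    AffineSubspace.vadd_mem_of_mem_direction
      (by rw [direction_affineSpan, vectorSpan_eq_span_vsub_set_right k hpS]; exact hd)
      (subset_affineSpan k S hpS)
  have hdp : d + p ∈ ({p} : Set V) := hJK ▸ ⟨hmem J hpJ hdJ, hmem K hpK hdK⟩
  simpa using hdp

section FreeSum

variable {J K : Set (Fin n → ℝ)} {p : Fin n → ℝ}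

lemma inLambda_projAlong_of_isAffineFreeSum (hfree : IsAffineFreeSum J K p)
    {y z : Fin (n + 1) → ℝ} (hy : y ∈ cone J) (hz : z ∈ cone K) (hyz : IsLat (y + z)) :
    InLambda p (projAlong p y) := by
  obtain ⟨-, hpJ, hpK, hJK, hdecomp⟩ := hfree
  have hspan : projAlong p (y + z) ∈ Submodule.span ℝ ((fun x => x - p) '' (J ∪ K)) := by
    rw [map_add, image_union, Submodule.span_union]
    exact Submodule.add_mem_sup (projAlong_mem_span_of_mem_cone hy)
      (projAlong_mem_span_of_mem_cone hz)
  obtain ⟨⟨q₁, q₂⟩, ⟨⟨hq₁, hq₁Λ⟩, ⟨hq₂, -⟩, hsum⟩, -⟩ :=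
    hdecomp _ hspan (inLambda_projAlong_of_isLat hyz)
  have hswap : q₁ - projAlong p y = projAlong p z - q₂ := by
    rw [sub_eq_sub_iff_add_eq_add, ← map_add, add_comm z, hsum]
  have hq₁y : q₁ - projAlong p y = 0 := eq_zero_of_mem_span_sub_inter hpJ hpK hJK
    (sub_mem hq₁ (projAlong_mem_span_of_mem_cone hy))
    (hswap ▸ sub_mem (projAlong_mem_span_of_mem_cone hz) hq₂)
  rwa [← sub_eq_zero.mp hq₁y]

lemma exists_mem_pllenv_sub_mem_cone (hJ : Convex ℝ J) (hK : Convex ℝ K)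
    (hfree : IsAffineFreeSum J K p) {y z : Fin (n + 1) → ℝ} (hy : y ∈ cone J)
    (hz : z ∈ cone K) (hyz : IsLat (y + z)) :
    ∃ x ∈ pllenv p J, y + z - x ∈ cone K := by
  have ⟨hp, hpJ, hpK, _⟩ := hfree
  obtain ⟨s, hs, hlat⟩ :=
    exists_nonneg_isLat_add_smul_emb hp (inLambda_projAlong_of_isAffineFreeSum hfree hy hz hyz)
  have hy₀ : y + s • emb p ∈ latt (cone J) :=
    ⟨add_mem_cone hJ hy (smul_emb_mem_cone hpJ hs), hlat⟩
  obtain ⟨μ, hsμ, hμ⟩ := exists_le_sub_epsP_eq_smul_emb (J := J)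
    (show y + s • emb p - s • emb p ∈ cone J by simpa using hy)
  refine ⟨_, ⟨_, hy₀, rfl⟩, ?_⟩
  have hdiff : y + z - epsP p J (y + s • emb p) = z + (μ - s) • emb p := by
    rw [sub_smul, ← hμ]
    abel
  rw [hdiff]
  exact add_mem_cone hK hz (smul_emb_mem_cone hpK (sub_nonneg.mpr hsμ))

lemma eq_of_mem_pllenv_of_sub_mem_cone (hJ : IsCompact J) (hpJ : p ∈ J) (hpK : p ∈ K)
    (hJK : (affineSpan ℝ J : Set (Fin n → ℝ)) ∩ affineSpan ℝ K = {p})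
    {w x₁ x₂ : Fin (n + 1) → ℝ} (hx₁ : x₁ ∈ pllenv p J) (hx₂ : x₂ ∈ pllenv p J)
    (h₁ : w - x₁ ∈ cone K) (h₂ : w - x₂ ∈ cone K) : x₁ = x₂ := by
  obtain ⟨y₁, ⟨hy₁, -⟩, rfl⟩ := hx₁
  obtain ⟨y₂, ⟨hy₂, -⟩, rfl⟩ := hx₂
  have hJside : projAlong p (epsP p J y₁ - epsP p J y₂) ∈
      Submodule.span ℝ ((fun x => x - p) '' J) := by
    rw [map_sub]
    exact sub_mem (projAlong_mem_span_of_mem_cone (epsP_mem_cone hJ hy₁))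
      (projAlong_mem_span_of_mem_cone (epsP_mem_cone hJ hy₂))
  have hKside : projAlong p (epsP p J y₁ - epsP p J y₂) ∈
      Submodule.span ℝ ((fun x => x - p) '' K) := by
    rw [← sub_sub_sub_cancel_left _ _ w, map_sub]
    exact sub_mem (projAlong_mem_span_of_mem_cone h₂) (projAlong_mem_span_of_mem_cone h₁)
  exact epsP_eq_of_sub_eq_smul_emb hJ hy₁ hy₂ <| eq_smul_emb_of_projAlong_eq_zero <|
    eq_zero_of_mem_span_sub_inter hpJ hpK hJK hJside hKside

end FreeSum

theorem cone_affine_free_sum_lattice_decomposition_general {n : ℕ}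
    (J K : Set (Fin n → ℝ)) (p : Fin n → ℝ)
    (hJconv : Convex ℝ J) (hKconv : Convex ℝ K) (hJcpt : IsCompact J)
    (hfree : IsAffineFreeSum J K p) :
    ∀ w : Fin (n + 1) → ℤ,
      (fun i => (w i : ℝ)) ∈ cone (convexHull ℝ (J ∪ K)) ↔
        ∃! x, x ∈ pllenv p J ∧ (fun i => (w i : ℝ)) - x ∈ cone K := by
  have ⟨_, hpJ, hpK, hJK, _⟩ := hfree
  intro w
  rw [mem_cone_convexHull_union_iff hJconv hKconv hpJ hpK]
  constructor
  · rintro ⟨y, hy, z, hz, hw⟩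
    obtain ⟨x, hx, hxK⟩ :=
      exists_mem_pllenv_sub_mem_cone hJconv hKconv hfree hy hz (hw ▸ fun i => ⟨w i, rfl⟩)
    rw [← hw] at hxK
    exact ⟨x, ⟨hx, hxK⟩, fun x' ⟨hx', hx'K⟩ =>
      eq_of_mem_pllenv_of_sub_mem_cone hJcpt hpJ hpK hJK hx' hx hx'K hxK⟩
  · rintro ⟨x, ⟨hx, hxK⟩, -⟩
    exact ⟨x, pllenv_subset_cone hJcpt p hx, _, hxK, (add_sub_cancel x _).symm⟩

/-- Proposition 5.4 (disjoint decomposition of the lattice points of the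
cone over an affine free sum). -/
theorem cone_affine_free_sum_lattice_decomposition {n : ℕ} (hn : 1 ≤ n)
    (J K : Set (Fin n → ℝ)) (p : Fin n → ℝ)
    (hJconv : Convex ℝ J) (hKconv : Convex ℝ K) (hJcpt : IsCompact J)
    (hfree : IsAffineFreeSum J K p) :
    ∀ w : Fin (n + 1) → ℤ,
      (fun i => (w i : ℝ)) ∈ cone (convexHull ℝ (J ∪ K)) ↔
        ∃! x, x ∈ pllenv p J ∧ (fun i => (w i : ℝ)) - x ∈ cone K :=
  cone_affine_free_sum_lattice_decomposition_general J K p hJconv hKconv hJcpt hfree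

end ArxivFreeSum
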